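/- arXiv:2209.00443 — 4 statements merged into one kernel-verified Lean document; each statement's English description precedes it below -/
import Mathlib

section
/- Let 𝔤 be a finite-dimensional real Lie algebra with an invariant inner product ⟨·,·⟩ (i.e. ⟨⁅z,x⁆,y⟩ + ⟨x,⁅z,y⁆⟩ = 0 for all x,y,z ∈ 𝔤). Let 𝔨 ⊆ 𝔤 be a Lie subalgebra and 𝔥 ⊆ 𝔨 an ideal of 𝔨; let 𝔪₀ be the orthogonal complement of 𝔥 in 𝔨, 𝔪′ the orthogonal complement of 𝔨 in 𝔤, and 𝔪 = 𝔪₀ ⊕ 𝔪′ the orthogonal complement of 𝔥 in 𝔤. Assume 𝔪′ is a nonzero irreducible 𝔨-module under the adjoint action, and assume 𝔥 is not an ideal of 𝔤. Then 𝔪₀ is exactly the fixed-point set of the adjoint action of 𝔥 on 𝔪, i.e. {v ∈ 𝔪 : ⁅w,v⁆ = 0 for all w ∈ 𝔥} = 𝔪₀. -/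
/-!
Invariance of the inner product gives two facts: for `w ∈ 𝔥` and `v ∈ 𝔪₀` the bracket `⁅w, v⁆`
lies in `𝔥` and is orthogonal to `𝔥`, hence vanishes; and `ad 𝔨` preserves `𝔪′`. By the Jacobi
identity the centralizer of `𝔥` is `ad 𝔨`-stable, so its intersection with `𝔪′` is a
`𝔨`-submodule of `𝔪′`, hence `0` or `𝔪′`. It is not `𝔪′`, for then `𝔤 = 𝔨 + 𝔪′` would
normalize `𝔥`. So the centralizer of `𝔥` meets `𝔪 = 𝔪₀ ⊕ 𝔪′` in `𝔪₀ ⊕ 0` by the modular law.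
-/

open LinearMap (BilinForm)

section LieCentralizer

variable {R L : Type*} [CommRing R] [LieRing L] [LieAlgebra R L]

def lieCentralizer (𝔥 : Submodule R L) : Submodule R L where
  carrier := {v | ∀ w ∈ 𝔥, ⁅w, v⁆ = 0}
  add_mem' ha hb w hw := by rw [lie_add, ha w hw, hb w hw, add_zero]
  zero_mem' w _ := lie_zero w
  smul_mem' c v hv w hw := by rw [lie_smul, hv w hw, smul_zero]

theorem lie_mem_lieCentralizer {𝔥 : Submodule R L} {x v : L} (hx : ∀ y ∈ 𝔥, ⁅x, y⁆ ∈ 𝔥)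
    (hv : v ∈ lieCentralizer 𝔥) : ⁅x, v⁆ ∈ lieCentralizer 𝔥 := by
  intro w hw
  rw [leibniz_lie, hv w hw, lie_zero, add_zero, ← lie_skew w x, neg_lie, hv _ (hx w hw), neg_zero]

theorem lie_mem_of_sup_eq_top {𝔨 𝔪 𝔥 : Submodule R L} (hsup : 𝔨 ⊔ 𝔪 = ⊤)
    (h𝔪 : 𝔪 ≤ lieCentralizer 𝔥) (h𝔥 : ∀ x ∈ 𝔨, ∀ y ∈ 𝔥, ⁅x, y⁆ ∈ 𝔥) (x : L) {y : L}
    (hy : y ∈ 𝔥) : ⁅x, y⁆ ∈ 𝔥 := by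
  obtain ⟨k, hk, m, hm, rfl⟩ := Submodule.mem_sup.1 (hsup ▸ Submodule.mem_top : x ∈ 𝔨 ⊔ 𝔪)
  rw [add_lie, ← lie_skew m y, h𝔪 hm y hy, neg_zero, add_zero]
  exact h𝔥 k hk y hy

end LieCentralizer

section InvariantForm

variable {R L : Type*} [CommRing R] [LieRing L] [LieAlgebra R L] {B : BilinForm R L}

theorem lie_mem_flip_orthogonal (hBinv : ∀ x y z : L, B ⁅z, x⁆ y + B x ⁅z, y⁆ = 0)
    {N : Submodule R L} {x v : L} (hN : ∀ n ∈ N, ⁅x, n⁆ ∈ N)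
    (hv : v ∈ BilinForm.orthogonal B.flip N) : ⁅x, v⁆ ∈ BilinForm.orthogonal B.flip N := by
  intro n hn
  have := hBinv v n x
  rwa [show B v ⁅x, n⁆ = 0 from hv _ (hN n hn), add_zero] at this

theorem inf_flip_orthogonal_le_lieCentralizer (hB : ∀ x, B x x = 0 → x = 0)
    (hBinv : ∀ x y z : L, B ⁅z, x⁆ y + B x ⁅z, y⁆ = 0) {𝔨 𝔥 : Submodule R L} (h𝔥𝔨 : 𝔥 ≤ 𝔨)
    (h𝔥 : ∀ x ∈ 𝔨, ∀ y ∈ 𝔥, ⁅x, y⁆ ∈ 𝔥) : 𝔨 ⊓ BilinForm.orthogonal B.flip 𝔥 ≤ lieCentralizer 𝔥 := by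
  rintro v ⟨hv𝔨, hv⟩ w hw
  have hmem : ⁅w, v⁆ ∈ 𝔥 := by
    rw [← lie_skew]
    exact 𝔥.neg_mem (h𝔥 v hv𝔨 w hw)
  exact hB _ (lie_mem_flip_orthogonal hBinv (h𝔥 w (h𝔥𝔨 hw)) hv _ hmem)

end InvariantForm

theorem LinearMap.BilinForm.sup_orthogonal_eq_top {K V : Type*} [Field K] [AddCommGroup V]
    [Module K V] [FiniteDimensional K V] {B : BilinForm K V} (hB : ∀ x, B x x = 0 → x = 0)
    (W : Submodule K V) : W ⊔ B.orthogonal W = ⊤ := by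
  have hdisj : W ⊓ B.orthogonal W = ⊥ := eq_bot_iff.2 fun x ⟨hxW, hx⟩ => hB x (hx x hxW)
  have hdim := BilinForm.finrank_add_finrank_orthogonal' (B := B) W
  have hsup := Submodule.finrank_sup_add_finrank_inf_eq W (B.orthogonal W)
  rw [hdisj, finrank_bot] at hsup
  have hle := Submodule.finrank_le (W ⊔ B.orthogonal W)
  exact Submodule.eq_top_of_finrank_eq (by omega)

theorem m0_eq_fixed_point_set_general
    {L : Type*} [LieRing L] [LieAlgebra ℝ L] [FiniteDimensional ℝ L]
    (B : L →ₗ[ℝ] L →ₗ[ℝ] ℝ)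
    (hBpos : ∀ x : L, x ≠ 0 → 0 < B x x)
    (hBinv : ∀ x y z : L, B ⁅z, x⁆ y + B x ⁅z, y⁆ = 0)
    (𝔨 : Submodule ℝ L) (h𝔨 : ∀ x ∈ 𝔨, ∀ y ∈ 𝔨, ⁅x, y⁆ ∈ 𝔨)
    (𝔥 : Submodule ℝ L) (h𝔥𝔨 : 𝔥 ≤ 𝔨)
    (h𝔥ideal : ∀ x ∈ 𝔨, ∀ y ∈ 𝔥, ⁅x, y⁆ ∈ 𝔥)
    (𝔪₀ : Submodule ℝ L)
    (h𝔪₀ : ∀ v : L, v ∈ 𝔪₀ ↔ v ∈ 𝔨 ∧ ∀ w ∈ 𝔥, B v w = 0)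
    (𝔪' : Submodule ℝ L)
    (h𝔪' : ∀ v : L, v ∈ 𝔪' ↔ ∀ w ∈ 𝔨, B v w = 0)
    (𝔪 : Submodule ℝ L) (h𝔪 : 𝔪 = 𝔪₀ ⊔ 𝔪')
    (h𝔪'irr : ∀ W : Submodule ℝ L, W ≤ 𝔪' →
      (∀ x ∈ 𝔨, ∀ v ∈ W, ⁅x, v⁆ ∈ W) → W = ⊥ ∨ W = 𝔪')
    (h𝔥notideal : ¬ (∀ x : L, ∀ v ∈ 𝔥, ⁅x, v⁆ ∈ 𝔥)) :
    ∀ v : L, (v ∈ 𝔪 ∧ ∀ w ∈ 𝔥, ⁅w, v⁆ = 0) ↔ v ∈ 𝔪₀ := by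
  have hB (x : L) (hx : B x x = 0) : x = 0 := by_contra fun hne => (hBpos x hne).ne' hx
  have h𝔪'eq : 𝔪' = BilinForm.orthogonal B.flip 𝔨 := Submodule.ext h𝔪'
  have h𝔪₀eq : 𝔪₀ = 𝔨 ⊓ BilinForm.orthogonal B.flip 𝔥 := Submodule.ext h𝔪₀
  have h𝔪₀C : 𝔪₀ ≤ lieCentralizer 𝔥 :=
    h𝔪₀eq ▸ inf_flip_orthogonal_le_lieCentralizer hB hBinv h𝔥𝔨 h𝔥ideal
  have h𝔪'C : 𝔪' ⊓ lieCentralizer 𝔥 = ⊥ := by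
    refine (h𝔪'irr _ inf_le_left fun x hx v hv => ⟨?_, ?_⟩).resolve_right fun h => h𝔥notideal ?_
    · exact h𝔪'eq ▸ lie_mem_flip_orthogonal hBinv (h𝔨 x hx) (h𝔪'eq ▸ hv.1)
    · exact lie_mem_lieCentralizer (h𝔥ideal x hx) hv.2
    · have hsup : 𝔨 ⊔ 𝔪' = ⊤ := h𝔪'eq ▸ BilinForm.sup_orthogonal_eq_top (B := B.flip) hB 𝔨
      exact fun x y hy => lie_mem_of_sup_eq_top hsup (inf_eq_left.1 h) h𝔥ideal x hy
  intro v
  change v ∈ 𝔪 ⊓ lieCentralizer 𝔥 ↔ v ∈ 𝔪₀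
  rw [h𝔪, sup_inf_assoc_of_le _ h𝔪₀C, h𝔪'C, sup_bot_eq]

/-- **`𝔪₀` is the fixed-point set of `ad(𝔥)` on `𝔪`.**
With `𝔤, B, 𝔨, 𝔥, 𝔪₀, 𝔪′` as in the orthogonal reductive decomposition and
`𝔪 = 𝔪₀ ⊕ 𝔪′`, if `𝔪′` is a nonzero irreducible `𝔨`-module under the adjoint action
and `𝔥` is not an ideal of `𝔤`, then `{v ∈ 𝔪 : ⁅w,v⁆ = 0 ∀ w ∈ 𝔥} = 𝔪₀`. -/
theorem m0_eq_fixed_point_set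
    {L : Type*} [LieRing L] [LieAlgebra ℝ L] [FiniteDimensional ℝ L]
    (B : L →ₗ[ℝ] L →ₗ[ℝ] ℝ)
    (hBsymm : ∀ x y : L, B x y = B y x)
    (hBpos : ∀ x : L, x ≠ 0 → 0 < B x x)
    (hBinv : ∀ x y z : L, B ⁅z, x⁆ y + B x ⁅z, y⁆ = 0)
    (𝔨 : Submodule ℝ L) (h𝔨 : ∀ x ∈ 𝔨, ∀ y ∈ 𝔨, ⁅x, y⁆ ∈ 𝔨)
    (𝔥 : Submodule ℝ L) (h𝔥𝔨 : 𝔥 ≤ 𝔨)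
    (h𝔥ideal : ∀ x ∈ 𝔨, ∀ y ∈ 𝔥, ⁅x, y⁆ ∈ 𝔥)
    (𝔪₀ : Submodule ℝ L)
    (h𝔪₀ : ∀ v : L, v ∈ 𝔪₀ ↔ v ∈ 𝔨 ∧ ∀ w ∈ 𝔥, B v w = 0)
    (𝔪' : Submodule ℝ L)
    (h𝔪' : ∀ v : L, v ∈ 𝔪' ↔ ∀ w ∈ 𝔨, B v w = 0)
    (𝔪 : Submodule ℝ L) (h𝔪 : 𝔪 = 𝔪₀ ⊔ 𝔪')
    (h𝔪'ne : 𝔪' ≠ ⊥)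
    (h𝔪'irr : ∀ W : Submodule ℝ L, W ≤ 𝔪' →
      (∀ x ∈ 𝔨, ∀ v ∈ W, ⁅x, v⁆ ∈ W) → W = ⊥ ∨ W = 𝔪')
    (h𝔥notideal : ¬ (∀ x : L, ∀ v ∈ 𝔥, ⁅x, v⁆ ∈ 𝔥)) :
    ∀ v : L, (v ∈ 𝔪 ∧ ∀ w ∈ 𝔥, ⁅w, v⁆ = 0) ↔ v ∈ 𝔪₀ :=
  m0_eq_fixed_point_set_general B hBpos hBinv 𝔨 h𝔨 𝔥 h𝔥𝔨 h𝔥ideal 𝔪₀ h𝔪₀ 𝔪' h𝔪' 𝔪 h𝔪 h𝔪'irr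
    h𝔥notideal
end

section
/- Let 𝔤 be a finite-dimensional real Lie algebra with an invariant inner product ⟨·,·⟩ (i.e. ⟨⁅z,x⁆,y⟩ + ⟨x,⁅z,y⁆⟩ = 0 for all x,y,z ∈ 𝔤). Let 𝔨 ⊆ 𝔤 be a Lie subalgebra and 𝔥 ⊆ 𝔨 an ideal of 𝔨; let 𝔪₀ be the orthogonal complement of 𝔥 in 𝔨, 𝔪′ the orthogonal complement of 𝔨 in 𝔤, and 𝔪 = 𝔪₀ ⊕ 𝔪′. Assume 𝔪′ is a nonzero irreducible 𝔨-module under the adjoint action, and assume neither 𝔥 nor 𝔪₀ is an ideal of 𝔤. If X ∈ 𝔪₀ satisfies ⁅X, v⁆ = 0 for all v ∈ 𝔪₀, then for every invariant inner product α on 𝔪 and every Z ∈ 𝔪 one has α(pr_𝔪⁅X,Z⁆, X) = 0; that is, X is a Riemannian equigeodesic vector. -/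
/-- An invariant inner product on the subspace `𝔪` of the Lie algebra `L`, encoded as a
bilinear form on `L` which is symmetric and positive definite on `𝔪`, and `ad 𝔥`-invariant
on `𝔪`. -/
def IsInvariantInnerOn {L : Type*} [LieRing L] [LieAlgebra ℝ L]
    (𝔥 𝔪 : Submodule ℝ L) (α : L →ₗ[ℝ] L →ₗ[ℝ] ℝ) : Prop :=
  (∀ u ∈ 𝔪, ∀ v ∈ 𝔪, α u v = α v u) ∧
  (∀ u ∈ 𝔪, u ≠ 0 → 0 < α u u) ∧
  (∀ w ∈ 𝔥, ∀ u ∈ 𝔪, ∀ v ∈ 𝔪, α ⁅w, u⁆ v + α u ⁅w, v⁆ = 0)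

/-!
Let `B` be the invariant inner product. Since `𝔥` is an ideal of `𝔨` and `X ∈ 𝔨` is
`B`-orthogonal to `𝔥`, the bracket `⁅w, X⁆` with `w ∈ 𝔥` lies in `𝔥 ∩ 𝔥ᗮ`, so `ad 𝔥` kills `X`.
The span of `⁅𝔥, 𝔪'⁆` is a `𝔨`-submodule of `𝔪'`; it cannot vanish, for then `𝔥` would
commute with `𝔪'` and, as `𝔤 = 𝔨 ⊕ 𝔪'`, be an ideal of `𝔤`. By irreducibility it is all of
`𝔪'`. For any `ad 𝔥`-invariant `α`, `α(⁅w, u⁆, X) = -α(u, ⁅w, X⁆) = 0`, so `α(𝔪', X) = 0`.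
Finally `⁅X, Z⁆ = ⁅X, Z'⁆ ∈ 𝔪'` for `Z = Z₀ + Z'` with `Z₀ ∈ 𝔪₀` and `Z' ∈ 𝔪'`, and the
projection fixes it.
-/

open LinearMap.BilinForm

namespace LinearMap.BilinForm

theorem disjoint_orthogonal_self {R M : Type*} [CommRing R] [AddCommGroup M] [Module R M]
    {B : LinearMap.BilinForm R M} (hB : ∀ x, B x x = 0 → x = 0) (W : Submodule R M) :
    Disjoint W (B.orthogonal W) :=
  Submodule.disjoint_def.2 fun x hx hxo => hB x (hxo x hx)

theorem sup_orthogonal_eq_top_s13 {K V : Type*} [Field K] [AddCommGroup V] [Module K V]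
    [FiniteDimensional K V] {B : LinearMap.BilinForm K V} (hrefl : B.IsRefl)
    (hB : ∀ x, B x x = 0 → x = 0) (W : Submodule K V) : W ⊔ B.orthogonal W = ⊤ :=
  ((isCompl_orthogonal_iff_disjoint hrefl).2 (disjoint_orthogonal_self hB W)).sup_eq_top

end LinearMap.BilinForm

section BracketSpan

variable {R L : Type*} [CommRing R] [LieRing L] [LieAlgebra R L]

def bracketSpan (A C : Submodule R L) : Submodule R L :=
  Submodule.span R (Set.image2 (fun a c => ⁅a, c⁆) (A : Set L) C)

variable {A C : Submodule R L}

theorem lie_mem_bracketSpan {a c : L} (ha : a ∈ A) (hc : c ∈ C) : ⁅a, c⁆ ∈ bracketSpan A C :=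
  Submodule.subset_span (Set.mem_image2_of_mem ha hc)

theorem bracketSpan_le {N : Submodule R L} (h : ∀ a ∈ A, ∀ c ∈ C, ⁅a, c⁆ ∈ N) :
    bracketSpan A C ≤ N :=
  Submodule.span_le.2 (Set.image2_subset_iff.2 h)

theorem lie_mem_bracketSpan_of_lie_mem {k v : L} (hA : ∀ a ∈ A, ⁅k, a⁆ ∈ A)
    (hC : ∀ c ∈ C, ⁅k, c⁆ ∈ C) (hv : v ∈ bracketSpan A C) : ⁅k, v⁆ ∈ bracketSpan A C := by
  refine (Submodule.map_span_le (LieAlgebra.ad R L k) _ _).2 ?_ (Submodule.mem_map_of_mem hv)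
  rintro _ ⟨a, ha, c, hc, rfl⟩
  rw [LieAlgebra.ad_apply, leibniz_lie]
  exact add_mem (lie_mem_bracketSpan (hA a ha) hc) (lie_mem_bracketSpan ha (hC c hc))

theorem forall_lie_mem_of_bracketSpan_eq_bot {𝔨 𝔥 : Submodule R L} (hsup : 𝔨 ⊔ C = ⊤)
    (h𝔥 : ∀ x ∈ 𝔨, ∀ v ∈ 𝔥, ⁅x, v⁆ ∈ 𝔥) (hbot : bracketSpan 𝔥 C = ⊥) :
    ∀ x : L, ∀ v ∈ 𝔥, ⁅x, v⁆ ∈ 𝔥 := by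
  intro x v hv
  obtain ⟨k, hk, c, hc, rfl⟩ := Submodule.mem_sup.1 (hsup ▸ Submodule.mem_top : x ∈ 𝔨 ⊔ C)
  have hcv : ⁅c, v⁆ = 0 := by
    rw [← lie_skew, neg_eq_zero, ← Submodule.mem_bot R, ← hbot]
    exact lie_mem_bracketSpan hv hc
  rw [add_lie, hcv, add_zero]
  exact h𝔥 k hk v hv

theorem apply_eq_zero_of_mem_bracketSpan {𝔥 𝔪 : Submodule R L} {α : LinearMap.BilinForm R L}
    (hα : ∀ w ∈ 𝔥, ∀ u ∈ 𝔪, ∀ v ∈ 𝔪, α ⁅w, u⁆ v + α u ⁅w, v⁆ = 0) (hC : C ≤ 𝔪)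
    {X v : L} (hX : X ∈ 𝔪) (hXc : ∀ w ∈ 𝔥, ⁅w, X⁆ = 0) (hv : v ∈ bracketSpan 𝔥 C) :
    α v X = 0 := by
  refine bracketSpan_le (N := LinearMap.ker (α.flip X)) (fun w hw u hu => ?_) hv
  have := hα w hw u (hC hu) X hX
  rwa [hXc w hw, map_zero, add_zero] at this

end BracketSpan

section Orthogonal

variable {R L : Type*} [CommRing R] [LieRing L] [LieAlgebra R L] {B : LinearMap.BilinForm R L}

theorem lie_mem_orthogonal (hBinv : ∀ x y z : L, B ⁅z, x⁆ y + B x ⁅z, y⁆ = 0)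
    {𝔨 : Submodule R L} (h𝔨 : ∀ x ∈ 𝔨, ∀ y ∈ 𝔨, ⁅x, y⁆ ∈ 𝔨) {k v : L} (hk : k ∈ 𝔨)
    (hv : v ∈ B.orthogonal 𝔨) : ⁅k, v⁆ ∈ B.orthogonal 𝔨 := by
  intro n hn
  have := hBinv n v k
  rwa [hv _ (h𝔨 k hk n hn), zero_add] at this

theorem lie_eq_zero_of_mem_orthogonal (hBinv : ∀ x y z : L, B ⁅z, x⁆ y + B x ⁅z, y⁆ = 0)
    (hB : ∀ x, B x x = 0 → x = 0) {𝔨 𝔥 : Submodule R L} (h𝔥𝔨 : 𝔥 ≤ 𝔨)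
    (h𝔥 : ∀ x ∈ 𝔨, ∀ y ∈ 𝔥, ⁅x, y⁆ ∈ 𝔥) {X w : L} (hX𝔨 : X ∈ 𝔨) (hX : X ∈ B.orthogonal 𝔥)
    (hw : w ∈ 𝔥) : ⁅w, X⁆ = 0 := by
  have hw𝔥 : ⁅w, X⁆ ∈ 𝔥 := by
    rw [← lie_skew]
    exact neg_mem (h𝔥 X hX𝔨 w hw)
  have hwo : ⁅w, X⁆ ∈ B.orthogonal 𝔥 := fun n hn => by
    have := hBinv n X w
    rwa [hX _ (h𝔥 w (h𝔥𝔨 hw) n hn), zero_add] at this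
  exact Submodule.disjoint_def.1 (disjoint_orthogonal_self hB 𝔥) _ hw𝔥 hwo

end Orthogonal

theorem apply_eq_self_of_disjoint {R M : Type*} [Ring R] [AddCommGroup M] [Module R M]
    {𝔥 𝔪 : Submodule R M} (p : M → M) (hp : ∀ x, p x ∈ 𝔪 ∧ x - p x ∈ 𝔥)
    (hdisj : Disjoint 𝔥 𝔪) {y : M} (hy : y ∈ 𝔪) : p y = y :=
  (sub_eq_zero.1 <| Submodule.disjoint_def.1 hdisj _ (hp y).2 (sub_mem hy (hp y).1)).symm

theorem riemannian_equigeodesic_of_mem_center_of_m0_general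
    {L : Type*} [LieRing L] [LieAlgebra ℝ L] [FiniteDimensional ℝ L]
    (B : L →ₗ[ℝ] L →ₗ[ℝ] ℝ)
    (hBsymm : ∀ x y : L, B x y = B y x)
    (hBpos : ∀ x : L, x ≠ 0 → 0 < B x x)
    (hBinv : ∀ x y z : L, B ⁅z, x⁆ y + B x ⁅z, y⁆ = 0)
    (𝔨 : Submodule ℝ L) (h𝔨 : ∀ x ∈ 𝔨, ∀ y ∈ 𝔨, ⁅x, y⁆ ∈ 𝔨)
    (𝔥 : Submodule ℝ L) (h𝔥𝔨 : 𝔥 ≤ 𝔨)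
    (h𝔥ideal : ∀ x ∈ 𝔨, ∀ y ∈ 𝔥, ⁅x, y⁆ ∈ 𝔥)
    (𝔪₀ : Submodule ℝ L)
    (h𝔪₀ : ∀ v : L, v ∈ 𝔪₀ ↔ v ∈ 𝔨 ∧ ∀ w ∈ 𝔥, B v w = 0)
    (𝔪' : Submodule ℝ L)
    (h𝔪' : ∀ v : L, v ∈ 𝔪' ↔ ∀ w ∈ 𝔨, B v w = 0)
    (𝔪 : Submodule ℝ L) (h𝔪 : 𝔪 = 𝔪₀ ⊔ 𝔪')
    (h𝔪'irr : ∀ W : Submodule ℝ L, W ≤ 𝔪' →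
      (∀ x ∈ 𝔨, ∀ v ∈ W, ⁅x, v⁆ ∈ W) → W = ⊥ ∨ W = 𝔪')
    (h𝔥notideal : ¬ (∀ x : L, ∀ v ∈ 𝔥, ⁅x, v⁆ ∈ 𝔥))
    (pr : L →ₗ[ℝ] L) (hpr : ∀ x : L, pr x ∈ 𝔪 ∧ x - pr x ∈ 𝔥)
    (X : L) (hX : X ∈ 𝔪₀) (hXc : ∀ v ∈ 𝔪₀, ⁅X, v⁆ = 0) :
    ∀ α : L →ₗ[ℝ] L →ₗ[ℝ] ℝ, IsInvariantInnerOn 𝔥 𝔪 α →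
      ∀ Z ∈ 𝔪, α (pr ⁅X, Z⁆) X = 0 := by
  intro α hα Z hZ
  have hB : ∀ x, B x x = 0 → x = 0 := fun x hx => by_contra fun h => (hBpos x h).ne' hx
  obtain rfl : 𝔪' = orthogonal B 𝔨 := by
    ext v
    simp only [h𝔪', mem_orthogonal_iff, hBsymm v]
  obtain rfl : 𝔪₀ = 𝔨 ⊓ orthogonal B 𝔥 := by
    ext v
    simp only [h𝔪₀, Submodule.mem_inf, mem_orthogonal_iff, hBsymm v]
  subst h𝔪
  have h𝔪'inv : ∀ k ∈ 𝔨, ∀ v ∈ orthogonal B 𝔨, ⁅k, v⁆ ∈ orthogonal B 𝔨 :=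
    fun k hk v hv => lie_mem_orthogonal hBinv h𝔨 hk hv
  have hspan : bracketSpan 𝔥 (orthogonal B 𝔨) = orthogonal B 𝔨 := by
    refine (h𝔪'irr _ ?_ ?_).resolve_left fun hbot => h𝔥notideal ?_
    · exact bracketSpan_le fun w hw => h𝔪'inv w (h𝔥𝔨 hw)
    · exact fun k hk v => lie_mem_bracketSpan_of_lie_mem (h𝔥ideal k hk) (h𝔪'inv k hk)
    · have hrefl : B.IsRefl := fun x y h => (hBsymm y x).trans h
      exact forall_lie_mem_of_bracketSpan_eq_bot (sup_orthogonal_eq_top_s13 hrefl hB 𝔨) h𝔥ideal hbot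
  obtain ⟨Z₀, hZ₀, Z', hZ', rfl⟩ := Submodule.mem_sup.1 hZ
  have hXZ : ⁅X, Z₀ + Z'⁆ ∈ orthogonal B 𝔨 := by
    rw [lie_add, hXc Z₀ hZ₀, zero_add]
    exact h𝔪'inv X hX.1 Z' hZ'
  have hdisj : Disjoint 𝔥 (𝔨 ⊓ orthogonal B 𝔥 ⊔ orthogonal B 𝔨) :=
    (disjoint_orthogonal_self hB 𝔥).mono_right (sup_le inf_le_right (orthogonal_le h𝔥𝔨))
  rw [apply_eq_self_of_disjoint pr hpr hdisj (Submodule.mem_sup_right hXZ)]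
  exact apply_eq_zero_of_mem_bracketSpan hα.2.2 le_sup_right (Submodule.mem_sup_left hX)
    (fun w hw => lie_eq_zero_of_mem_orthogonal hBinv hB h𝔥𝔨 h𝔥ideal hX.1 hX.2 hw) (hspan.symm ▸ hXZ)

/-- With `𝔥 ⊆ 𝔨 ⊆ 𝔤`, `𝔥` an ideal of the subalgebra `𝔨`, `𝔪₀ = 𝔥ᗮ ∩ 𝔨`, `𝔪′ = 𝔨ᗮ`,
`𝔪 = 𝔪₀ ⊕ 𝔪′`, `𝔪′` a nonzero irreducible `𝔨`-module and neither `𝔥` nor `𝔪₀` an ideal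
of `𝔤`: any `X ∈ 𝔪₀` with `⁅X, 𝔪₀⁆ = 0` satisfies the Kowalski–Vanhecke criterion
`α(pr_𝔪 ⁅X,Z⁆, X) = 0` for every invariant inner product `α` on `𝔪` and every `Z ∈ 𝔪`,
i.e. `X` is a Riemannian equigeodesic vector. -/
theorem riemannian_equigeodesic_of_mem_center_of_m0
    {L : Type*} [LieRing L] [LieAlgebra ℝ L] [FiniteDimensional ℝ L]
    (B : L →ₗ[ℝ] L →ₗ[ℝ] ℝ)
    (hBsymm : ∀ x y : L, B x y = B y x)
    (hBpos : ∀ x : L, x ≠ 0 → 0 < B x x)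
    (hBinv : ∀ x y z : L, B ⁅z, x⁆ y + B x ⁅z, y⁆ = 0)
    (𝔨 : Submodule ℝ L) (h𝔨 : ∀ x ∈ 𝔨, ∀ y ∈ 𝔨, ⁅x, y⁆ ∈ 𝔨)
    (𝔥 : Submodule ℝ L) (h𝔥𝔨 : 𝔥 ≤ 𝔨)
    (h𝔥ideal : ∀ x ∈ 𝔨, ∀ y ∈ 𝔥, ⁅x, y⁆ ∈ 𝔥)
    (𝔪₀ : Submodule ℝ L)
    (h𝔪₀ : ∀ v : L, v ∈ 𝔪₀ ↔ v ∈ 𝔨 ∧ ∀ w ∈ 𝔥, B v w = 0)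
    (𝔪' : Submodule ℝ L)
    (h𝔪' : ∀ v : L, v ∈ 𝔪' ↔ ∀ w ∈ 𝔨, B v w = 0)
    (𝔪 : Submodule ℝ L) (h𝔪 : 𝔪 = 𝔪₀ ⊔ 𝔪')
    (h𝔪'ne : 𝔪' ≠ ⊥)
    (h𝔪'irr : ∀ W : Submodule ℝ L, W ≤ 𝔪' →
      (∀ x ∈ 𝔨, ∀ v ∈ W, ⁅x, v⁆ ∈ W) → W = ⊥ ∨ W = 𝔪')
    (h𝔥notideal : ¬ (∀ x : L, ∀ v ∈ 𝔥, ⁅x, v⁆ ∈ 𝔥))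
    (h𝔪₀notideal : ¬ (∀ x : L, ∀ v ∈ 𝔪₀, ⁅x, v⁆ ∈ 𝔪₀))
    (pr : L →ₗ[ℝ] L) (hpr : ∀ x : L, pr x ∈ 𝔪 ∧ x - pr x ∈ 𝔥)
    (X : L) (hX : X ∈ 𝔪₀) (hXc : ∀ v ∈ 𝔪₀, ⁅X, v⁆ = 0) :
    ∀ α : L →ₗ[ℝ] L →ₗ[ℝ] ℝ, IsInvariantInnerOn 𝔥 𝔪 α →
      ∀ Z ∈ 𝔪, α (pr ⁅X, Z⁆) X = 0 :=
  riemannian_equigeodesic_of_mem_center_of_m0_general B hBsymm hBpos hBinv 𝔨 h𝔨 𝔥 h𝔥𝔨 h𝔥ideal 𝔪₀ h𝔪₀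
    𝔪' h𝔪' 𝔪 h𝔪 h𝔪'irr h𝔥notideal pr hpr X hX hXc
end

section
/- Let ℍ be the real quaternions, n ≥ 1, and let 𝔤 = sp(n+1) = {A ∈ ℍ^{(n+1)×(n+1)} : A + conj(A)ᵗ = 0} with bracket the matrix commutator and invariant inner product ⟨A,B⟩ = −Re(tr(A·B)). Let 𝔥 = {diag(C, 0) : C ∈ sp(n)} (sp(n) embedded in the upper-left n×n block), let 𝔪 = 𝔥^⊥, pr_𝔪 the orthogonal projection onto 𝔪, and 𝔪₀ = {v ∈ 𝔪 : ⁅w,v⁆ = 0 for all w ∈ 𝔥} (explicitly, 𝔪₀ = {diag(0_n, q) : q ∈ ℍ, conj(q) = −q}). Then there is no X ∈ 𝔪 \ {0} that is a Randers equigeodesic vector; i.e., for every X ∈ 𝔪 \ {0} there exist an invariant inner product α on 𝔪, a vector u ∈ 𝔪₀ with α(u,u) < 1, and Z ∈ 𝔪 such that α(pr_𝔪⁅X,Z⁆, X) + √(α(X,X))·α(pr_𝔪⁅X,Z⁆, u) ≠ 0. -/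
/-
Take for `α` the standard form `⟨A, B⟩ = -Re tr(AB)`. For `u ∈ 𝔪₀` the bracket `Z = ⁅X, u⁆`
again lies in `𝔪`, and since `pr` only discards an `𝔥`-component, which is orthogonal to `X` and
`u`, ad-invariance turns the Randers expression into `-√⟨X, X⟩ ⟨Z, Z⟩`. So it suffices to find
`u ∈ 𝔪₀` with `⁅X, u⁆ ≠ 0`; take `u = ½ E_{n+1,n+1} q` with `q ∈ {i, j}`. If `X` commuted with
both choices, its last row and column would vanish (an imaginary quaternion commuting with `i`
and `j` is zero), so `X ∈ 𝔥 ∩ 𝔥ᗮ = 0`.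
-/

open Matrix

attribute [local instance 100] LieRing.ofAssociativeRing

/-- The quaternion imaginary unit `i`. -/
noncomputable def qi : Quaternion ℝ := ⟨0, 1, 0, 0⟩

/-- The invariant inner product `⟨A,B⟩ = −Re(tr(A·B))` on quaternionic matrices. -/
noncomputable def ipH (n : ℕ) (A B : Matrix (Fin (n + 1)) (Fin (n + 1)) (Quaternion ℝ)) :
    ℝ := -((A * B).trace).re

open scoped Quaternion

section InvariantForm

variable {L : Type*} [LieRing L] [LieAlgebra ℝ L] {α : LinearMap.BilinForm ℝ L}

lemma apply_lie_apply_self_eq_zero (hα : α.lieInvariant L) (x z : L) : α ⁅x, z⁆ x = 0 := by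
  simpa using hα x z x

lemma apply_lie_eq_zero_of_lie_eq_zero (hα : α.lieInvariant L) {x u w : L} (h : ⁅w, u⁆ = 0) :
    α ⁅x, u⁆ w = 0 := by
  rw [← lie_skew, map_neg, LinearMap.neg_apply, hα, ← lie_skew, h]
  simp

/-- The Randers geodesic expression for `Z = ⁅X, u⁆`, where `Y = pr ⁅X, Z⁆`. -/
lemma randers_expr_eq_neg_of_lie_lie_sub_mem {𝔥 : Submodule ℝ L} (hα : α.lieInvariant L)
    {X u Y : L} (hX : ∀ w ∈ 𝔥, α w X = 0) (hu : ∀ w ∈ 𝔥, α w u = 0)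
    (hY : ⁅X, ⁅X, u⁆⁆ - Y ∈ 𝔥) (s : ℝ) :
    α Y X + s * α Y u = -(s * α ⁅X, u⁆ ⁅X, u⁆) := by
  have hYv : ∀ v, α (⁅X, ⁅X, u⁆⁆ - Y) v = 0 → α Y v = α ⁅X, ⁅X, u⁆⁆ v := fun v hv => by
    rw [map_sub, LinearMap.sub_apply] at hv
    linarith
  rw [hYv X (hX _ hY), hYv u (hu _ hY), apply_lie_apply_self_eq_zero hα, hα]
  ring

end InvariantForm

lemma lie_add_star_eq_zero {R : Type*} [Ring R] [StarRing R] {a b : R}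
    (ha : a + star a = 0) (hb : b + star b = 0) : ⁅a, b⁆ + star ⁅a, b⁆ = 0 := by
  rw [Ring.lie_def, star_sub, star_mul, star_mul, eq_neg_of_add_eq_zero_right ha,
    eq_neg_of_add_eq_zero_right hb]
  noncomm_ring

section QuaternionMatrix

variable {R : Type*} [CommRing R] {m : Type*} [Fintype m]

lemma Quaternion.re_sum {ι : Type*} (s : Finset ι) (f : ι → ℍ[R]) :
    (∑ i ∈ s, f i).re = ∑ i ∈ s, (f i).re :=
  map_sum (QuaternionAlgebra.reₗ _ _ _) f s

lemma re_trace_mul_comm (A B : Matrix m m ℍ[R]) : (A * B).trace.re = (B * A).trace.re := by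
  simp only [Matrix.trace, Matrix.diag, Matrix.mul_apply, Quaternion.re_sum, Quaternion.re_mul]
  rw [Finset.sum_comm]
  exact Finset.sum_congr rfl fun _ _ => Finset.sum_congr rfl fun _ _ => by ring

lemma re_trace_conjTranspose_mul_self (A : Matrix m m ℍ[R]) :
    (Aᴴ * A).trace.re = ∑ i, ∑ j, Quaternion.normSq (A j i) := by
  simp only [Matrix.trace, Matrix.diag, Matrix.mul_apply, Matrix.conjTranspose_apply,
    Quaternion.star_mul_self, Quaternion.re_sum, Quaternion.re_coe]

lemma re_trace_conjTranspose_mul_self_pos {A : Matrix m m ℍ[ℝ]} (hA : A ≠ 0) :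
    0 < (Aᴴ * A).trace.re := by
  obtain ⟨i, j, hij⟩ : ∃ i j, A j i ≠ 0 := by
    by_contra! h
    exact hA (Matrix.ext fun j i => h i j)
  rw [re_trace_conjTranspose_mul_self]
  exact Finset.sum_pos' (fun _ _ => Finset.sum_nonneg fun _ _ => Quaternion.normSq_nonneg)
    ⟨i, Finset.mem_univ _, Finset.sum_pos' (fun _ _ => Quaternion.normSq_nonneg)
      ⟨j, Finset.mem_univ _, Quaternion.normSq_nonneg.lt_of_ne' (Quaternion.normSq_ne_zero.2 hij)⟩⟩

end QuaternionMatrix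

section InnerProduct

variable {n : ℕ}

noncomputable def ipForm (n : ℕ) :
    LinearMap.BilinForm ℝ (Matrix (Fin (n + 1)) (Fin (n + 1)) ℍ[ℝ]) :=
  (LinearMap.mul ℝ _).compr₂ (-(QuaternionAlgebra.reₗ _ _ _ ∘ₗ Matrix.traceLinearMap _ ℝ _))

lemma ipForm_apply (A B : Matrix (Fin (n + 1)) (Fin (n + 1)) ℍ[ℝ]) : ipForm n A B = ipH n A B :=
  rfl

lemma ipH_comm (A B : Matrix (Fin (n + 1)) (Fin (n + 1)) ℍ[ℝ]) : ipH n A B = ipH n B A := by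
  rw [ipH, ipH, re_trace_mul_comm]

lemma ipH_mul_assoc (A B C : Matrix (Fin (n + 1)) (Fin (n + 1)) ℍ[ℝ]) :
    ipH n (A * B) C = ipH n A (B * C) := by
  rw [ipH, ipH, mul_assoc]

lemma ipForm_lieInvariant : (ipForm n).lieInvariant (Matrix (Fin (n + 1)) (Fin (n + 1)) ℍ[ℝ]) := by
  intro x y z
  simp only [Ring.lie_def, map_sub, LinearMap.sub_apply, ipForm_apply, ipH_mul_assoc]
  rw [ipH_comm y (z * x), ipH_mul_assoc, ipH_comm z, ipH_mul_assoc]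
  ring

lemma ipH_self_pos {A : Matrix (Fin (n + 1)) (Fin (n + 1)) ℍ[ℝ]} (hA : A + Aᴴ = 0) (h0 : A ≠ 0) :
    0 < ipH n A A := by
  have hAA : A * A = -(Aᴴ * A) := by rw [← neg_mul, ← eq_neg_of_add_eq_zero_left hA]
  rw [ipH, hAA, Matrix.trace_neg, Quaternion.re_neg, neg_neg]
  exact re_trace_conjTranspose_mul_self_pos h0

lemma ipH_single_left (i j : Fin (n + 1)) (c : ℍ[ℝ]) (B : Matrix (Fin (n + 1)) (Fin (n + 1)) ℍ[ℝ]) :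
    ipH n (Matrix.single i j c) B = -(c * B j i).re := by
  rw [ipH, Matrix.trace_single_mul, smul_eq_mul]

end InnerProduct

noncomputable def qj : ℍ[ℝ] := ⟨0, 0, 1, 0⟩

lemma Quaternion.self_add_star_eq_zero_iff {a : ℍ[ℝ]} : a + star a = 0 ↔ a.re = 0 := by
  rw [Quaternion.self_add_star', ← Quaternion.coe_zero, Quaternion.coe_inj]
  simp

lemma qi_add_star_qi : qi + star qi = 0 :=
  Quaternion.self_add_star_eq_zero_iff.mpr rfl

lemma qj_add_star_qj : qj + star qj = 0 :=
  Quaternion.self_add_star_eq_zero_iff.mpr rfl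

lemma re_qi_mul_qi : (qi * qi).re = -1 := by
  rw [Quaternion.re_mul]; simp [qi]

lemma re_qj_mul_qj : (qj * qj).re = -1 := by
  rw [Quaternion.re_mul]; simp [qj]

lemma qi_ne_zero : qi ≠ 0 := fun h => by simpa [h] using re_qi_mul_qi

lemma Quaternion.eq_zero_of_commute_qi_qj {a : ℍ[ℝ]} (ha : a.re = 0) (hi : Commute a qi)
    (hj : Commute a qj) : a = 0 := by
  have hi' := Quaternion.ext_iff.mp hi.eq
  have hj' := Quaternion.ext_iff.mp hj.eq
  simp only [Quaternion.imI_mul, Quaternion.imJ_mul, Quaternion.imK_mul] at hi' hj'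
  simp only [qi, qj] at hi' hj'
  ext <;> simp <;> linarith [hi'.2.2.1, hi'.2.2.2, hj'.2.1]

section LastCorner

variable {n : ℕ}

lemma lie_single_last_eq_zero {W : Matrix (Fin (n + 1)) (Fin (n + 1)) ℍ[ℝ]}
    (hW : ∀ p, W p (Fin.last n) = 0 ∧ W (Fin.last n) p = 0) (c : ℍ[ℝ]) :
    ⁅W, Matrix.single (Fin.last n) (Fin.last n) c⁆ = 0 := by
  rw [Ring.lie_def, sub_eq_zero]
  ext p q : 1
  simp [Matrix.mul_apply, Matrix.single_apply, ite_and, fun p => (hW p).1, fun p => (hW p).2]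

lemma add_star_apply_eq_zero {X : Matrix (Fin (n + 1)) (Fin (n + 1)) ℍ[ℝ]} (hX : X + Xᴴ = 0)
    (p q : Fin (n + 1)) : X p q + star (X q p) = 0 := by
  simpa using congrFun₂ hX p q

lemma forall_last_eq_zero_of_lie_single_qi_qj {X : Matrix (Fin (n + 1)) (Fin (n + 1)) ℍ[ℝ]}
    (hX : X + Xᴴ = 0) (hi : ⁅X, Matrix.single (Fin.last n) (Fin.last n) qi⁆ = 0)
    (hj : ⁅X, Matrix.single (Fin.last n) (Fin.last n) qj⁆ = 0) :
    ∀ p, X p (Fin.last n) = 0 ∧ X (Fin.last n) p = 0 := by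
  have hcol : ∀ {c}, ⁅X, Matrix.single (Fin.last n) (Fin.last n) c⁆ = 0 → ∀ p,
      X p (Fin.last n) * c = if p = Fin.last n then c * X (Fin.last n) (Fin.last n) else 0 := by
    intro c h p
    have := congrFun₂ h p (Fin.last n)
    rw [Ring.lie_def, Matrix.sub_apply, Matrix.mul_single_apply_same,
      Matrix.zero_apply, sub_eq_zero] at this
    rw [this]
    split_ifs with hp
    · rw [hp, Matrix.single_mul_apply_same]
    · exact Matrix.single_mul_apply_of_ne _ _ _ _ _ hp _
  have hcorner : X (Fin.last n) (Fin.last n) = 0 := by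
    refine Quaternion.eq_zero_of_commute_qi_qj ?_ ?_ ?_
    · exact Quaternion.self_add_star_eq_zero_iff.mp (add_star_apply_eq_zero hX _ _)
    · simpa [commute_iff_eq] using hcol hi (Fin.last n)
    · simpa [commute_iff_eq] using hcol hj (Fin.last n)
  have hlast : ∀ p, X p (Fin.last n) = 0 := by
    intro p
    by_cases hp : p = Fin.last n
    · rw [hp, hcorner]
    · have := hcol hi p
      rw [if_neg hp, mul_eq_zero] at this
      exact this.resolve_right qi_ne_zero
  exact fun p => ⟨hlast p, by simpa [hlast p] using add_star_apply_eq_zero hX (Fin.last n) p⟩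

end LastCorner

section Sphere

variable {n : ℕ}

lemma isInvariantInnerOn_ipForm {𝔥 𝔪 : Submodule ℝ (Matrix (Fin (n + 1)) (Fin (n + 1)) ℍ[ℝ])}
    (h𝔪 : ∀ A ∈ 𝔪, A + Aᴴ = 0) : IsInvariantInnerOn 𝔥 𝔪 (ipForm n) :=
  ⟨fun u _ v _ => ipH_comm u v, fun u hu hu0 => ipH_self_pos (h𝔪 u hu) hu0,
    fun w _ u _ v _ => by rw [ipForm_lieInvariant, neg_add_cancel]⟩

lemma exists_lie_single_last_ne_zero {X : Matrix (Fin (n + 1)) (Fin (n + 1)) ℍ[ℝ]}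
    (hX : X + Xᴴ = 0) (hX0 : X ≠ 0)
    (horth : ∀ W, W + Wᴴ = 0 → (∀ p, W p (Fin.last n) = 0 ∧ W (Fin.last n) p = 0) →
      ipH n X W = 0) :
    ∃ q : ℍ[ℝ], q + star q = 0 ∧ (q * q).re = -1 ∧
      ⁅X, Matrix.single (Fin.last n) (Fin.last n) q⁆ ≠ 0 := by
  by_contra! h
  have hlast := forall_last_eq_zero_of_lie_single_qi_qj hX (h qi qi_add_star_qi re_qi_mul_qi)
    (h qj qj_add_star_qj re_qj_mul_qj)
  exact (ipH_self_pos hX hX0).ne' (horth X hX hlast)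

lemma single_last_mem_of_add_star_eq_zero
    {𝔥 𝔪 𝔪₀ : Submodule ℝ (Matrix (Fin (n + 1)) (Fin (n + 1)) ℍ[ℝ])}
    (h𝔥 : ∀ W, W ∈ 𝔥 ↔
      (W + Wᴴ = 0 ∧ ∀ p : Fin (n + 1), W p (Fin.last n) = 0 ∧ W (Fin.last n) p = 0))
    (h𝔪 : ∀ A, A ∈ 𝔪 ↔ (A + Aᴴ = 0 ∧ ∀ W ∈ 𝔥, ipH n A W = 0))
    (h𝔪₀ : ∀ v, v ∈ 𝔪₀ ↔ (v ∈ 𝔪 ∧ ∀ w ∈ 𝔥, ⁅w, v⁆ = 0)) {c : ℍ[ℝ]} (hc : c + star c = 0) :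
    Matrix.single (Fin.last n) (Fin.last n) c ∈ 𝔪₀ := by
  refine (h𝔪₀ _).mpr ⟨(h𝔪 _).mpr ⟨?_, fun W hW => ?_⟩, fun W hW =>
    lie_single_last_eq_zero ((h𝔥 W).mp hW).2 c⟩
  · rw [Matrix.conjTranspose_single, ← Matrix.single_add, hc, Matrix.single_zero]
  · rw [ipH_single_left, (((h𝔥 W).mp hW).2 _).1, mul_zero, Quaternion.re_zero, neg_zero]

end Sphere

theorem sp_n_plus_one_quotient_sp_n_has_no_randers_equigeodesic_vectors_general
    (n : ℕ)
    (𝔥 : Submodule ℝ (Matrix (Fin (n + 1)) (Fin (n + 1)) (Quaternion ℝ)))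
    (h𝔥 : ∀ W, W ∈ 𝔥 ↔
      (W + Wᴴ = 0 ∧ ∀ p : Fin (n + 1), W p (Fin.last n) = 0 ∧ W (Fin.last n) p = 0))
    (𝔪 : Submodule ℝ (Matrix (Fin (n + 1)) (Fin (n + 1)) (Quaternion ℝ)))
    (h𝔪 : ∀ A, A ∈ 𝔪 ↔ (A + Aᴴ = 0 ∧ ∀ W ∈ 𝔥, ipH n A W = 0))
    (𝔪₀ : Submodule ℝ (Matrix (Fin (n + 1)) (Fin (n + 1)) (Quaternion ℝ)))
    (h𝔪₀ : ∀ v, v ∈ 𝔪₀ ↔ (v ∈ 𝔪 ∧ ∀ w ∈ 𝔥, ⁅w, v⁆ = 0))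
    (pr : Matrix (Fin (n + 1)) (Fin (n + 1)) (Quaternion ℝ) →ₗ[ℝ]
      Matrix (Fin (n + 1)) (Fin (n + 1)) (Quaternion ℝ))
    (hpr : ∀ A, A + Aᴴ = 0 → pr A ∈ 𝔪 ∧ A - pr A ∈ 𝔥) :
    ∀ X ∈ 𝔪, X ≠ 0 →
      ∃ α : Matrix (Fin (n + 1)) (Fin (n + 1)) (Quaternion ℝ) →ₗ[ℝ]
          Matrix (Fin (n + 1)) (Fin (n + 1)) (Quaternion ℝ) →ₗ[ℝ] ℝ,
        IsInvariantInnerOn 𝔥 𝔪 α ∧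
          ∃ u ∈ 𝔪₀, α u u < 1 ∧
            ∃ Z ∈ 𝔪, α (pr ⁅X, Z⁆) X + Real.sqrt (α X X) * α (pr ⁅X, Z⁆) u ≠ 0 := by
  intro X hX hX0
  obtain ⟨hXskew, hXorth⟩ := (h𝔪 X).mp hX
  obtain ⟨q, hq, hqq, hXq⟩ := exists_lie_single_last_ne_zero hXskew hX0
    fun W hW hWlast => hXorth W ((h𝔥 W).mpr ⟨hW, hWlast⟩)
  set u := (2⁻¹ : ℝ) • Matrix.single (Fin.last n) (Fin.last n) q
  have hu : u ∈ 𝔪₀ := 𝔪₀.smul_mem _ (single_last_mem_of_add_star_eq_zero h𝔥 h𝔪 h𝔪₀ hq)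
  obtain ⟨hu𝔪, hu𝔥⟩ := (h𝔪₀ u).mp hu
  have hZskew : ⁅X, u⁆ + ⁅X, u⁆ᴴ = 0 := lie_add_star_eq_zero hXskew ((h𝔪 u).mp hu𝔪).1
  have hZ : ⁅X, u⁆ ∈ 𝔪 := (h𝔪 _).mpr ⟨hZskew, fun W hW =>
    apply_lie_eq_zero_of_lie_eq_zero ipForm_lieInvariant (hu𝔥 W hW)⟩
  have hZ0 : ⁅X, u⁆ ≠ 0 := by rw [lie_smul]; exact smul_ne_zero (by norm_num) hXq
  refine ⟨ipForm n, isInvariantInnerOn_ipForm fun A hA => ((h𝔪 A).mp hA).1, u, hu, ?_, ⁅X, u⁆,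
    hZ, ?_⟩
  · simp only [u, map_smul, LinearMap.smul_apply, smul_eq_mul, ipForm_apply, ipH_single_left,
      Matrix.single_apply_same, hqq]
    norm_num
  · rw [randers_expr_eq_neg_of_lie_lie_sub_mem ipForm_lieInvariant (𝔥 := 𝔥)
      (fun W hW => (ipH_comm W X).trans (hXorth W hW))
      (fun W hW => (ipH_comm W u).trans (((h𝔪 u).mp hu𝔪).2 W hW))
      (hpr _ (lie_add_star_eq_zero hXskew hZskew)).2]
    exact neg_ne_zero.mpr
      (mul_pos (Real.sqrt_pos.mpr (ipH_self_pos hXskew hX0)) (ipH_self_pos hZskew hZ0)).ne'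

/-- **The sphere `S^{4n+3} = Sp(n+1)/Sp(n)` has no Randers equigeodesic vectors.**
Here `𝔤 = sp(n+1) = {A : A + Aᴴ = 0}` with the commutator bracket and the invariant inner
product `⟨A,B⟩ = −Re(tr(A·B))`, `𝔥 = sp(n)` embedded in the upper-left block, `𝔪 = 𝔥ᗮ`
(inside `𝔤`), and `𝔪₀` the fixed-point set of `ad 𝔥` on `𝔪`.  For every `X ∈ 𝔪 \ {0}`
there are an invariant inner product `α` on `𝔪`, a vector `u ∈ 𝔪₀` with `α(u,u) < 1` and
`Z ∈ 𝔪` violating the Randers geodesic-vector criterion. -/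
theorem sp_n_plus_one_quotient_sp_n_has_no_randers_equigeodesic_vectors
    (n : ℕ) (hn : 1 ≤ n)
    (𝔥 : Submodule ℝ (Matrix (Fin (n + 1)) (Fin (n + 1)) (Quaternion ℝ)))
    (h𝔥 : ∀ W, W ∈ 𝔥 ↔
      (W + Wᴴ = 0 ∧ ∀ p : Fin (n + 1), W p (Fin.last n) = 0 ∧ W (Fin.last n) p = 0))
    (𝔪 : Submodule ℝ (Matrix (Fin (n + 1)) (Fin (n + 1)) (Quaternion ℝ)))
    (h𝔪 : ∀ A, A ∈ 𝔪 ↔ (A + Aᴴ = 0 ∧ ∀ W ∈ 𝔥, ipH n A W = 0))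
    (𝔪₀ : Submodule ℝ (Matrix (Fin (n + 1)) (Fin (n + 1)) (Quaternion ℝ)))
    (h𝔪₀ : ∀ v, v ∈ 𝔪₀ ↔ (v ∈ 𝔪 ∧ ∀ w ∈ 𝔥, ⁅w, v⁆ = 0))
    (pr : Matrix (Fin (n + 1)) (Fin (n + 1)) (Quaternion ℝ) →ₗ[ℝ]
      Matrix (Fin (n + 1)) (Fin (n + 1)) (Quaternion ℝ))
    (hpr : ∀ A, A + Aᴴ = 0 → pr A ∈ 𝔪 ∧ A - pr A ∈ 𝔥) :
    ∀ X ∈ 𝔪, X ≠ 0 →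
      ∃ α : Matrix (Fin (n + 1)) (Fin (n + 1)) (Quaternion ℝ) →ₗ[ℝ]
          Matrix (Fin (n + 1)) (Fin (n + 1)) (Quaternion ℝ) →ₗ[ℝ] ℝ,
        IsInvariantInnerOn 𝔥 𝔪 α ∧
          ∃ u ∈ 𝔪₀, α u u < 1 ∧
            ∃ Z ∈ 𝔪, α (pr ⁅X, Z⁆) X + Real.sqrt (α X X) * α (pr ⁅X, Z⁆) u ≠ 0 :=
  sp_n_plus_one_quotient_sp_n_has_no_randers_equigeodesic_vectors_general n 𝔥 h𝔥 𝔪 h𝔪 𝔪₀ h𝔪₀ pr hpr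
end

section
/- Let n ≥ 1 and let 𝔤 = u(n+1) = {A ∈ ℂ^{(n+1)×(n+1)} : Aᴴ = −A} with bracket the matrix commutator and invariant inner product ⟨A,B⟩ = −Re(tr(A·B)). Let 𝔥 = {diag(C, 0) : C ∈ ℂ^{n×n}, Cᴴ = −C} (u(n) embedded in the upper-left block), let 𝔪 = 𝔥^⊥, pr_𝔪 the orthogonal projection onto 𝔪, and 𝔪₀ = {v ∈ 𝔪 : ⁅w,v⁆ = 0 for all w ∈ 𝔥} (explicitly, 𝔪₀ = {diag(0,…,0, t·i) : t ∈ ℝ}). Then the set of Randers equigeodesic vectors contained in 𝔪 is exactly 𝔪₀ \ {0}. -/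
/-!
Inside `u(n+1)`, `𝔪` consists of the skew-Hermitian matrices supported on the last row and
column, and `𝔪₀` is spanned by `E = diag(0, …, 0, i)`.

If `X ∈ 𝔪₀`, then `X` differs from some `W ∈ 𝔥` by a scalar matrix, so `ad X = ad W`. Hence
`⁅X, Z⁆ ∈ 𝔪`, and invariance gives `α(⁅W, Z⁆, v) = -α(Z, ⁅W, v⁆) = 0` for every `v ∈ 𝔪₀`: both
terms of the Randers criterion vanish, whatever the invariant `α` is.

Conversely, testing the criterion with `α = ⟨·,·⟩` and with `u = 0` and `u = cE` gives
`⟨pr ⁅X, Z⁆, E⟩ = 0` for all `Z ∈ 𝔪`, hence `⟨⁅X, Z⁆, E⟩ = 0` because `E ⊥ 𝔥`. For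
`Z = ⁅E, X⁆` invariance turns this into `⟨Z, Z⟩ = 0`, so `X` commutes with `E`, which forces
`X ∈ 𝔪₀`.
-/

open Matrix

attribute [local instance 100] LieRing.ofAssociativeRing

/-- The invariant inner product `⟨A,B⟩ = −Re(tr(A·B))` on complex matrices. -/
noncomputable def ipC (n : ℕ) (A B : Matrix (Fin (n + 1)) (Fin (n + 1)) ℂ) : ℝ :=
  -((A * B).trace).re

/-- `X` is a Randers equigeodesic vector: the geodesic-vector criterion
`α(pr_𝔪 ⁅X,Z⁆, X) + √(α(X,X))·α(pr_𝔪 ⁅X,Z⁆, u) = 0` for every invariant inner product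
`α` on `𝔪`, every `u ∈ 𝔪₀` with `α(u,u) < 1`, and every `Z ∈ 𝔪`. -/
def IsRandersEquigeodesicVector {L : Type*} [LieRing L] [LieAlgebra ℝ L]
    (𝔥 𝔪 𝔪₀ : Submodule ℝ L) (pr : L →ₗ[ℝ] L) (X : L) : Prop :=
  ∀ α : L →ₗ[ℝ] L →ₗ[ℝ] ℝ, IsInvariantInnerOn 𝔥 𝔪 α →
    ∀ u ∈ 𝔪₀, α u u < 1 →
      ∀ Z ∈ 𝔪, α (pr ⁅X, Z⁆) X + Real.sqrt (α X X) * α (pr ⁅X, Z⁆) u = 0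

section Reductive

variable {L : Type*} [LieRing L] [LieAlgebra ℝ L] {𝔥 𝔪 𝔪₀ : Submodule ℝ L} {pr : L →ₗ[ℝ] L}

theorem apply_eq_self_of_mem_of_disjoint (hpr : ∀ A ∈ 𝔪, pr A ∈ 𝔪 ∧ A - pr A ∈ 𝔥)
    (hdisj : Disjoint 𝔥 𝔪) {A : L} (hA : A ∈ 𝔪) : pr A = A := by
  obtain ⟨hpr𝔪, hpr𝔥⟩ := hpr A hA
  exact (sub_eq_zero.1 (Submodule.disjoint_def.1 hdisj _ hpr𝔥 (sub_mem hA hpr𝔪))).symm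

theorem IsRandersEquigeodesicVector.apply_pr_lie_eq_zero {X : L}
    (hX : IsRandersEquigeodesicVector 𝔥 𝔪 𝔪₀ pr X) {α : L →ₗ[ℝ] L →ₗ[ℝ] ℝ}
    (hα : IsInvariantInnerOn 𝔥 𝔪 α) (hX𝔪 : X ∈ 𝔪) (hX0 : X ≠ 0) {u : L} (hu : u ∈ 𝔪₀)
    {Z : L} (hZ : Z ∈ 𝔪) : α (pr ⁅X, Z⁆) u = 0 := by
  obtain ⟨c, hc0, hc⟩ : ∃ c : ℝ, c ≠ 0 ∧ c * c * α u u < 1 := by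
    generalize α u u = a
    refine ⟨(|a| + 1)⁻¹, by positivity, ?_⟩
    rw [show (|a| + 1)⁻¹ * (|a| + 1)⁻¹ * a = a / (|a| + 1) ^ 2 by
      rw [div_eq_mul_inv, ← inv_pow]; ring, div_lt_one (by positivity)]
    nlinarith [abs_nonneg a, le_abs_self a]
  have h₀ := hX α hα 0 (zero_mem _) (by simp) Z hZ
  have h₁ := hX α hα (c • u) (Submodule.smul_mem _ c hu) (by simpa [mul_assoc] using hc) Z hZ
  simp only [map_zero, mul_zero, add_zero] at h₀
  simp only [h₀, map_smul, smul_eq_mul, zero_add] at h₁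
  have hsqrt : Real.sqrt (α X X) ≠ 0 := (Real.sqrt_pos.2 (hα.2.1 X hX𝔪 hX0)).ne'
  simpa [hsqrt, hc0] using h₁

theorem isRandersEquigeodesicVector_of_lie_eq_lie (hred : ∀ w ∈ 𝔥, ∀ Z ∈ 𝔪, ⁅w, Z⁆ ∈ 𝔪)
    (hpr : ∀ A ∈ 𝔪, pr A = A) (h𝔪₀ : ∀ v ∈ 𝔪₀, v ∈ 𝔪 ∧ ∀ w ∈ 𝔥, ⁅w, v⁆ = 0)
    {X W : L} (hX : X ∈ 𝔪₀) (hW : W ∈ 𝔥) (hXW : ∀ Z ∈ 𝔪, ⁅X, Z⁆ = ⁅W, Z⁆) :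
    IsRandersEquigeodesicVector 𝔥 𝔪 𝔪₀ pr X := by
  intro α hα u hu _ Z hZ
  have hY : pr ⁅X, Z⁆ = ⁅W, Z⁆ := by rw [hXW Z hZ]; exact hpr _ (hred W hW Z hZ)
  have horth : ∀ v ∈ 𝔪₀, α (pr ⁅X, Z⁆) v = 0 := fun v hv => by
    obtain ⟨hv𝔪, hWv⟩ := h𝔪₀ v hv
    have hinv := hα.2.2 W hW Z hZ v hv𝔪
    rwa [hWv W hW, map_zero, add_zero, ← hY] at hinv
  rw [horth X hX, horth u hu, mul_zero, add_zero]

end Reductive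

namespace Matrix

variable {ι α : Type*}

def RowColZero [Zero α] (i₀ : ι) (W : Matrix ι ι α) : Prop := ∀ p, W p i₀ = 0 ∧ W i₀ p = 0

def BlockZero [Zero α] (i₀ : ι) (A : Matrix ι ι α) : Prop :=
  ∀ p q, p ≠ i₀ → q ≠ i₀ → A p q = 0

variable {i₀ : ι}

theorem eq_zero_of_rowColZero_of_blockZero [Zero α] {A : Matrix ι ι α} (h₁ : RowColZero i₀ A)
    (h₂ : BlockZero i₀ A) : A = 0 := by
  ext p q
  by_cases hp : p = i₀
  · subst hp; exact (h₁ q).2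
  by_cases hq : q = i₀
  · subst hq; exact (h₁ p).1
  exact h₂ p q hp hq

section

variable [DecidableEq ι]

theorem blockZero_single [Zero α] (c : α) : BlockZero i₀ (single i₀ i₀ c) := by
  intro p q hp _
  simp [Ne.symm hp]

theorem rowColZero_single_sub_smul_one [Ring α] (c : α) :
    RowColZero i₀ (single i₀ i₀ c - c • 1) := by
  intro p
  by_cases hp : p = i₀
  · subst hp; simp
  · simp [hp, Ne.symm hp]

theorem conjTranspose_single_eq_neg [AddGroup α] [StarAddMonoid α] {c : α} (hc : star c = -c) :
    (single i₀ i₀ c)ᴴ = -single i₀ i₀ c := by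
  rw [conjTranspose_single, hc, single_neg]

end

variable [Fintype ι]

theorem trace_mul_eq_zero_of_blockZero [NonUnitalNonAssocSemiring α] {A W : Matrix ι ι α}
    (hA : BlockZero i₀ A) (hW : RowColZero i₀ W) : (A * W).trace = 0 := by
  refine Finset.sum_eq_zero fun p _ => Finset.sum_eq_zero fun k _ => ?_
  by_cases hk : k = i₀
  · simp [hk, (hW p).2]
  by_cases hp : p = i₀
  · simp [hp, (hW k).1]
  simp [hA p k hp hk]

/-- `ipC`, bundled as an `ℝ`-bilinear form on `Matrix ι ι ℂ` for an arbitrary index type. -/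
noncomputable def negReTraceForm : Matrix ι ι ℂ →ₗ[ℝ] Matrix ι ι ℂ →ₗ[ℝ] ℝ :=
  (LinearMap.mul ℝ (Matrix ι ι ℂ)).compr₂
    (-(Complex.reLm.comp ((traceLinearMap ι ℂ ℂ).restrictScalars ℝ)))

theorem negReTraceForm_apply (A B : Matrix ι ι ℂ) :
    negReTraceForm A B = -((A * B).trace).re := rfl

theorem negReTraceForm_comm (A B : Matrix ι ι ℂ) : negReTraceForm A B = negReTraceForm B A := by
  rw [negReTraceForm_apply, negReTraceForm_apply, trace_mul_comm]

open scoped ComplexOrder in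
theorem negReTraceForm_self_pos {A : Matrix ι ι ℂ} (hA : Aᴴ = -A) (h : A ≠ 0) :
    0 < negReTraceForm A A := by
  have hnonneg : 0 ≤ (Aᴴ * A).trace := (posSemidef_conjTranspose_mul_self A).trace_nonneg
  have hne : (Aᴴ * A).trace ≠ 0 := mt trace_conjTranspose_mul_self_eq_zero_iff.1 h
  simpa [negReTraceForm_apply, hA] using (Complex.lt_def.1 (hnonneg.lt_of_ne hne.symm)).1

variable [DecidableEq ι]

theorem negReTraceForm_lie_add (w u v : Matrix ι ι ℂ) :
    negReTraceForm ⁅w, u⁆ v + negReTraceForm u ⁅w, v⁆ = 0 := by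
  simp only [Ring.lie_def, negReTraceForm_apply, sub_mul, mul_sub, trace_sub, Complex.sub_re,
    ← mul_assoc]
  rw [trace_mul_cycle u v w]
  ring

theorem isInvariantInnerOn_negReTraceForm {𝔥 𝔪 : Submodule ℝ (Matrix ι ι ℂ)}
    (h𝔪 : ∀ A ∈ 𝔪, Aᴴ = -A) : IsInvariantInnerOn 𝔥 𝔪 negReTraceForm :=
  ⟨fun u _ v _ => negReTraceForm_comm u v,
    fun u hu hu0 => negReTraceForm_self_pos (h𝔪 u hu) hu0,
    fun w _ u _ v _ => negReTraceForm_lie_add w u v⟩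

theorem conjTranspose_lie_eq_neg [Ring α] [StarRing α] {A B : Matrix ι ι α} (hA : Aᴴ = -A)
    (hB : Bᴴ = -B) : ⁅A, B⁆ᴴ = -⁅A, B⁆ := by
  simp only [Ring.lie_def, conjTranspose_sub, conjTranspose_mul, hA, hB]
  noncomm_ring

theorem lie_sub_smul_one [CommRing α] (A Z : Matrix ι ι α) (c : α) :
    ⁅A - c • 1, Z⁆ = ⁅A, Z⁆ := by
  simp [Ring.lie_def, sub_mul, mul_sub]

theorem blockZero_lie [Ring α] {w Z : Matrix ι ι α} (hw : RowColZero i₀ w)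
    (hZ : BlockZero i₀ Z) : BlockZero i₀ ⁅w, Z⁆ := by
  intro p q hp hq
  rw [Ring.lie_def, sub_apply, mul_apply, mul_apply, Finset.sum_eq_zero, Finset.sum_eq_zero,
    sub_zero] <;>
  · intro k _
    by_cases hk : k = i₀
    · simp [hk, (hw p).1, (hw q).2]
    · simp [hZ _ _ hk hq, hZ _ _ hp hk]

theorem lie_single_eq_zero [Ring α] {w : Matrix ι ι α} (hw : RowColZero i₀ w) (c : α) :
    ⁅w, single i₀ i₀ c⁆ = 0 := by
  ext p q
  rw [Ring.lie_def, sub_apply, zero_apply]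
  by_cases hp : p = i₀ <;> by_cases hq : q = i₀ <;> simp [hp, hq, (hw p).1, (hw q).2, (hw i₀).1]

theorem eq_single_of_lie_single_eq_zero [Ring α] [NoZeroDivisors α] {X : Matrix ι ι α}
    (hX : BlockZero i₀ X) {c : α} (hc : c ≠ 0) (h : ⁅single i₀ i₀ c, X⁆ = 0) :
    X = single i₀ i₀ (X i₀ i₀) := by
  ext p q
  have hpq := congrFun₂ h p q
  rw [Ring.lie_def, sub_apply, zero_apply] at hpq
  by_cases hp : p = i₀ <;> by_cases hq : q = i₀
  · simp [hp, hq]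
  · subst hp; simpa [single_apply, hq, Ne.symm hq, hc] using hpq
  · subst hq; simpa [single_apply, hp, Ne.symm hp, hc] using hpq
  · simp [hX p q hp hq, Ne.symm hp]

end Matrix

section UnitaryQuotient

variable {ι : Type*} {i₀ : ι} {𝔥 𝔪 𝔪₀ : Submodule ℝ (Matrix ι ι ℂ)}

theorem disjoint_of_rowColZero_of_blockZero (h𝔥 : ∀ W, W ∈ 𝔥 ↔ Wᴴ = -W ∧ RowColZero i₀ W)
    (h𝔪 : ∀ A, A ∈ 𝔪 ↔ Aᴴ = -A ∧ BlockZero i₀ A) : Disjoint 𝔥 𝔪 :=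
  Submodule.disjoint_def.2 fun A hA𝔥 hA𝔪 =>
    eq_zero_of_rowColZero_of_blockZero ((h𝔥 A).1 hA𝔥).2 ((h𝔪 A).1 hA𝔪).2

variable [DecidableEq ι]

theorem single_sub_smul_one_mem (h𝔥 : ∀ W, W ∈ 𝔥 ↔ Wᴴ = -W ∧ RowColZero i₀ W) {c : ℂ}
    (hc : star c = -c) : single i₀ i₀ c - c • 1 ∈ 𝔥 :=
  (h𝔥 _).2 ⟨by
    rw [conjTranspose_sub, conjTranspose_single_eq_neg hc, conjTranspose_smul, conjTranspose_one,
      hc, neg_smul, neg_sub_neg, neg_sub], rowColZero_single_sub_smul_one c⟩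

variable [Fintype ι]

theorem forall_mem_negReTraceForm_eq_zero_iff (h𝔥 : ∀ W, W ∈ 𝔥 ↔ Wᴴ = -W ∧ RowColZero i₀ W)
    {A : Matrix ι ι ℂ} (hA : Aᴴ = -A) : (∀ W ∈ 𝔥, negReTraceForm A W = 0) ↔ BlockZero i₀ A := by
  refine ⟨fun hA𝔥 => ?_, fun hA W hW => ?_⟩
  -- `A'` is the `𝔥`-part of `A`; it is orthogonal to `A - A'`, so `⟨A', A'⟩ = ⟨A, A'⟩ = 0`.
  · set A' : Matrix ι ι ℂ := of fun p q => if p = i₀ ∨ q = i₀ then 0 else A p q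
    have hA'skew : A'ᴴ = -A' := by
      ext p q
      have hpq : star (A q p) = -A p q := by simpa using congrFun₂ hA p q
      by_cases h : p = i₀ ∨ q = i₀ <;> simp [A', h, or_comm, ← hpq]
    have hA'𝔥 : A' ∈ 𝔥 := (h𝔥 A').2 ⟨hA'skew, fun p => by simp [A']⟩
    have hdiff : BlockZero i₀ (A - A') := fun p q hp hq => by simp [A', hp, hq]
    have hA'A' : negReTraceForm A' A' = 0 := by
      have h := negReTraceForm_apply (A - A') A'
      rw [trace_mul_eq_zero_of_blockZero hdiff ((h𝔥 A').1 hA'𝔥).2, map_sub, LinearMap.sub_apply,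
        hA𝔥 A' hA'𝔥] at h
      simpa using h
    have hA'0 : A' = 0 := by
      by_contra h
      exact (negReTraceForm_self_pos hA'skew h).ne' hA'A'
    intro p q hp hq
    simpa [A', hp, hq] using congrFun₂ hA'0 p q
  · rw [negReTraceForm_apply, trace_mul_eq_zero_of_blockZero hA ((h𝔥 W).1 hW).2]
    simp

theorem lie_mem_of_mem (h𝔥 : ∀ W, W ∈ 𝔥 ↔ Wᴴ = -W ∧ RowColZero i₀ W)
    (h𝔪 : ∀ A, A ∈ 𝔪 ↔ Aᴴ = -A ∧ BlockZero i₀ A) {w Z : Matrix ι ι ℂ} (hw : w ∈ 𝔥)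
    (hZ : Z ∈ 𝔪) : ⁅w, Z⁆ ∈ 𝔪 :=
  (h𝔪 _).2 ⟨conjTranspose_lie_eq_neg ((h𝔥 w).1 hw).1 ((h𝔪 Z).1 hZ).1,
    blockZero_lie ((h𝔥 w).1 hw).2 ((h𝔪 Z).1 hZ).2⟩

theorem mem_iff_eq_single (h𝔥 : ∀ W, W ∈ 𝔥 ↔ Wᴴ = -W ∧ RowColZero i₀ W)
    (h𝔪 : ∀ A, A ∈ 𝔪 ↔ Aᴴ = -A ∧ BlockZero i₀ A)
    (h𝔪₀ : ∀ v, v ∈ 𝔪₀ ↔ v ∈ 𝔪 ∧ ∀ w ∈ 𝔥, ⁅w, v⁆ = 0) (X : Matrix ι ι ℂ) :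
    X ∈ 𝔪₀ ↔ X ∈ 𝔪 ∧ X = single i₀ i₀ (X i₀ i₀) := by
  refine (h𝔪₀ X).trans (and_congr_right fun hX => ⟨fun hcomm => ?_, fun hXs w hw => ?_⟩)
  · have hD := hcomm _ (single_sub_smul_one_mem h𝔥 (c := Complex.I) (by simp))
    rw [lie_sub_smul_one] at hD
    exact eq_single_of_lie_single_eq_zero ((h𝔪 X).1 hX).2 Complex.I_ne_zero hD
  · rw [hXs]
    exact lie_single_eq_zero ((h𝔥 w).1 hw).2 _

theorem lie_single_eq_zero_of_isRandersEquigeodesicVector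
    (h𝔥 : ∀ W, W ∈ 𝔥 ↔ Wᴴ = -W ∧ RowColZero i₀ W)
    (h𝔪 : ∀ A, A ∈ 𝔪 ↔ Aᴴ = -A ∧ BlockZero i₀ A) {pr : Matrix ι ι ℂ →ₗ[ℝ] Matrix ι ι ℂ}
    (hpr : ∀ A, Aᴴ = -A → A - pr A ∈ 𝔥) (hE : single i₀ i₀ Complex.I ∈ 𝔪₀) {X : Matrix ι ι ℂ}
    (hX : X ∈ 𝔪) (hX0 : X ≠ 0) (hXR : IsRandersEquigeodesicVector 𝔥 𝔪 𝔪₀ pr X) :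
    ⁅single i₀ i₀ Complex.I, X⁆ = 0 := by
  set E := single i₀ i₀ Complex.I
  set Z := ⁅E, X⁆
  have hXskew := ((h𝔪 X).1 hX).1
  have hZskew : Zᴴ = -Z := conjTranspose_lie_eq_neg (conjTranspose_single_eq_neg (by simp)) hXskew
  have hZ : Z ∈ 𝔪 := by
    change ⁅E, X⁆ ∈ 𝔪
    rw [← lie_sub_smul_one E X Complex.I]
    exact lie_mem_of_mem h𝔥 h𝔪 (single_sub_smul_one_mem h𝔥 (by simp)) hX
  have hB := isInvariantInnerOn_negReTraceForm (𝔥 := 𝔥) fun A hA => ((h𝔪 A).1 hA).1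
  have hprY := hXR.apply_pr_lie_eq_zero hB hX hX0 hE hZ
  have hperp : negReTraceForm (⁅X, Z⁆ - pr ⁅X, Z⁆) E = 0 := by
    have hY𝔥 := ((h𝔥 _).1 (hpr _ (conjTranspose_lie_eq_neg hXskew hZskew))).2
    rw [negReTraceForm_comm, negReTraceForm_apply,
      trace_mul_eq_zero_of_blockZero (blockZero_single _) hY𝔥]
    simp
  have hZZ : negReTraceForm Z Z = 0 := by
    have hinv := negReTraceForm_lie_add X Z E
    rw [← lie_skew X E, map_neg] at hinv
    rw [map_sub, LinearMap.sub_apply, hprY] at hperp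
    linarith
  by_contra hne
  exact (negReTraceForm_self_pos hZskew hne).ne' hZZ

end UnitaryQuotient

theorem randers_equigeodesic_vectors_of_u_n_plus_one_quotient_u_n_general
    (n : ℕ)
    (𝔥 : Submodule ℝ (Matrix (Fin (n + 1)) (Fin (n + 1)) ℂ))
    (h𝔥 : ∀ W, W ∈ 𝔥 ↔
      (Wᴴ = -W ∧ ∀ p : Fin (n + 1), W p (Fin.last n) = 0 ∧ W (Fin.last n) p = 0))
    (𝔪 : Submodule ℝ (Matrix (Fin (n + 1)) (Fin (n + 1)) ℂ))
    (h𝔪 : ∀ A, A ∈ 𝔪 ↔ (Aᴴ = -A ∧ ∀ W ∈ 𝔥, ipC n A W = 0))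
    (𝔪₀ : Submodule ℝ (Matrix (Fin (n + 1)) (Fin (n + 1)) ℂ))
    (h𝔪₀ : ∀ v, v ∈ 𝔪₀ ↔ (v ∈ 𝔪 ∧ ∀ w ∈ 𝔥, ⁅w, v⁆ = 0))
    (pr : Matrix (Fin (n + 1)) (Fin (n + 1)) ℂ →ₗ[ℝ] Matrix (Fin (n + 1)) (Fin (n + 1)) ℂ)
    (hpr : ∀ A : Matrix (Fin (n + 1)) (Fin (n + 1)) ℂ,
      Aᴴ = -A → pr A ∈ 𝔪 ∧ A - pr A ∈ 𝔥) :
    ∀ X : Matrix (Fin (n + 1)) (Fin (n + 1)) ℂ,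
      (X ∈ 𝔪 ∧ X ≠ 0 ∧ IsRandersEquigeodesicVector 𝔥 𝔪 𝔪₀ pr X) ↔
        (X ∈ 𝔪₀ ∧ X ≠ 0) := by
  have h𝔪' : ∀ A, A ∈ 𝔪 ↔ Aᴴ = -A ∧ BlockZero (Fin.last n) A := fun A =>
    (h𝔪 A).trans (and_congr_right fun hA => forall_mem_negReTraceForm_eq_zero_iff h𝔥 hA)
  have h𝔪₀' := mem_iff_eq_single h𝔥 h𝔪' h𝔪₀
  intro X
  constructor
  · rintro ⟨hX, hX0, hXR⟩
    have hE : single (Fin.last n) (Fin.last n) Complex.I ∈ 𝔪₀ :=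
      (h𝔪₀' _).2 ⟨(h𝔪' _).2 ⟨conjTranspose_single_eq_neg (by simp), blockZero_single _⟩, by simp⟩
    have hXE := lie_single_eq_zero_of_isRandersEquigeodesicVector h𝔥 h𝔪'
      (fun A hA => (hpr A hA).2) hE hX hX0 hXR
    exact ⟨(h𝔪₀' X).2 ⟨hX, eq_single_of_lie_single_eq_zero ((h𝔪' X).1 hX).2 Complex.I_ne_zero hXE⟩,
      hX0⟩
  · rintro ⟨hX, hX0⟩
    obtain ⟨hX𝔪, hXs⟩ := (h𝔪₀' X).1 hX
    have hc : star (X (Fin.last n) (Fin.last n)) = -X (Fin.last n) (Fin.last n) := by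
      simpa using congrFun₂ ((h𝔪' X).1 hX𝔪).1 (Fin.last n) (Fin.last n)
    have hpr𝔪 : ∀ A ∈ 𝔪, pr A = A := fun A => apply_eq_self_of_mem_of_disjoint
      (fun B hB => hpr B ((h𝔪' B).1 hB).1) (disjoint_of_rowColZero_of_blockZero h𝔥 h𝔪')
    refine ⟨hX𝔪, hX0, isRandersEquigeodesicVector_of_lie_eq_lie
      (fun w hw Z hZ => lie_mem_of_mem h𝔥 h𝔪' hw hZ) hpr𝔪 (fun v hv => (h𝔪₀ v).1 hv) hX
      (single_sub_smul_one_mem h𝔥 hc) fun Z _ => ?_⟩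
    rw [lie_sub_smul_one, ← hXs]

/-- **Randers equigeodesic vectors for the sphere `S^{2n+1} = U(n+1)/U(n)`, `n ≥ 1`.**
Here `𝔤 = u(n+1)` with the commutator bracket and the invariant inner product
`⟨A,B⟩ = −Re(tr(A·B))`, `𝔥 = u(n)` embedded in the upper-left block, `𝔪 = 𝔥ᗮ`
(inside `𝔤`), and `𝔪₀` the fixed-point set of `ad 𝔥` on `𝔪`.  The set of Randers
equigeodesic vectors contained in `𝔪` is exactly `𝔪₀ \ {0}`. -/
theorem randers_equigeodesic_vectors_of_u_n_plus_one_quotient_u_n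
    (n : ℕ) (hn : 1 ≤ n)
    (𝔥 : Submodule ℝ (Matrix (Fin (n + 1)) (Fin (n + 1)) ℂ))
    (h𝔥 : ∀ W, W ∈ 𝔥 ↔
      (Wᴴ = -W ∧ ∀ p : Fin (n + 1), W p (Fin.last n) = 0 ∧ W (Fin.last n) p = 0))
    (𝔪 : Submodule ℝ (Matrix (Fin (n + 1)) (Fin (n + 1)) ℂ))
    (h𝔪 : ∀ A, A ∈ 𝔪 ↔ (Aᴴ = -A ∧ ∀ W ∈ 𝔥, ipC n A W = 0))
    (𝔪₀ : Submodule ℝ (Matrix (Fin (n + 1)) (Fin (n + 1)) ℂ))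
    (h𝔪₀ : ∀ v, v ∈ 𝔪₀ ↔ (v ∈ 𝔪 ∧ ∀ w ∈ 𝔥, ⁅w, v⁆ = 0))
    (pr : Matrix (Fin (n + 1)) (Fin (n + 1)) ℂ →ₗ[ℝ] Matrix (Fin (n + 1)) (Fin (n + 1)) ℂ)
    (hpr : ∀ A : Matrix (Fin (n + 1)) (Fin (n + 1)) ℂ,
      Aᴴ = -A → pr A ∈ 𝔪 ∧ A - pr A ∈ 𝔥) :
    ∀ X : Matrix (Fin (n + 1)) (Fin (n + 1)) ℂ,
      (X ∈ 𝔪 ∧ X ≠ 0 ∧ IsRandersEquigeodesicVector 𝔥 𝔪 𝔪₀ pr X) ↔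
        (X ∈ 𝔪₀ ∧ X ≠ 0) :=
  randers_equigeodesic_vectors_of_u_n_plus_one_quotient_u_n_general n 𝔥 h𝔥 𝔪 h𝔪 𝔪₀ h𝔪₀ pr hpr
end
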